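/- Let T be a positive trace-class operator on L²(ℝ) with trace 1, and define G_T(Z) = (1/2π) ∫_Z W(q,p) T W(q,p)* dq dp for Borel Z ⊆ ℝ². Then for any states T, S, the probability measure Z ↦ tr[S G_T(Z)] equals Z ↦ tr[T G_S(−Z)]. -/

import Mathlib

open MeasureTheory

local notation "H" => Lp ℂ 2 (volume : Measure ℝ)

/-! Since `W(-z)` agrees with `W(z)*` up to a unimodular phase, `|⟨ψ, W(-z) φ⟩| = |⟨φ, W(z) ψ⟩|`.
So after the reflection `z ↦ -z`, which preserves Lebesgue measure, the two integrands are the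
same double series summed in the two orders; it converges absolutely because the `W(z)` are
isometries, the vectors are unit vectors and the weights are summable. -/

open ComplexConjugate Complex

def IsWeylFamily (W : ℝ × ℝ → (H →L[ℂ] H)) : Prop :=
  ∀ q p : ℝ, ∀ ψ : H, (⇑(W (q, p) ψ) : ℝ → ℂ) =ᵐ[volume]
    fun x => exp (I * (q * p / 2)) * exp (I * (p * x)) * ψ (x - q)

theorem tsum_comm_of_summable_of_bounded {ι κ : Type*} {a : ι → ℝ} {b : κ → ℝ}
    (ha : Summable a) (hb : Summable b) {c : ι → κ → ℝ} {C : ℝ} (hc : ∀ i j, |c i j| ≤ C) :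
    ∑' i, ∑' j, a i * b j * c i j = ∑' j, ∑' i, a i * b j * c i j := by
  have hab : Summable fun ij : ι × κ => |a ij.1| * |b ij.2| :=
    ha.abs.mul_of_nonneg hb.abs (fun _ => abs_nonneg _) (fun _ => abs_nonneg _)
  refine (Summable.tsum_comm ((hab.mul_right C).of_norm_bounded fun ij => ?_)).symm
  rw [Function.uncurry_apply_pair, Real.norm_eq_abs, abs_mul, abs_mul]
  exact mul_le_mul_of_nonneg_left (hc _ _) (by positivity)

theorem setIntegral_neg_eq {G E : Type*} [MeasurableSpace G] [InvolutiveNeg G] [MeasurableNeg G]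
    [NormedAddCommGroup E] [NormedSpace ℝ E] (μ : Measure G) [μ.IsNegInvariant]
    (f : G → E) (s : Set G) :
    ∫ z in -s, f z ∂μ = ∫ z in s, f (-z) ∂μ := by
  simpa using (Measure.measurePreserving_neg μ).setIntegral_preimage_emb
    (MeasurableEquiv.neg G).measurableEmbedding (fun z => f (-z)) s

namespace IsWeylFamily

variable {W : ℝ × ℝ → (H →L[ℂ] H)} (hW : IsWeylFamily W)
include hW

theorem norm_apply (z : ℝ × ℝ) (ψ : H) : ‖W z ψ‖ = ‖ψ‖ := by
  rw [Lp.norm_def, Lp.norm_def]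
  congr 1
  calc eLpNorm (W (z.1, z.2) ψ) 2 volume = eLpNorm (ψ ∘ fun x => x - z.1) 2 volume :=
        eLpNorm_congr_norm_ae <| (hW z.1 z.2 ψ).mono fun x hx => by
          simp [hx, norm_exp]
    _ = eLpNorm ψ 2 volume := eLpNorm_comp_measurePreserving (Lp.aestronglyMeasurable ψ)
        (measurePreserving_sub_right volume z.1)

theorem inner_neg_eq (q p : ℝ) (φ ψ : H) :
    inner ℂ ψ (W (-(q, p)) φ) = exp (2 * I * (p * q)) * conj (inner ℂ φ (W (q, p) ψ)) := by
  have hphase : ∀ x : ℝ, exp (I * (q * p / 2)) * exp (I * (-p * x)) =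
      exp (2 * I * (p * q)) * (exp (-I * (q * p / 2)) * exp (-I * (p * (x + q)))) := by
    intro x
    simp only [← Complex.exp_add]
    ring_nf
  have hL : inner ℂ ψ (W (-(q, p)) φ) =
      ∫ x, conj (ψ x) * (exp (I * (q * p / 2)) * exp (I * (-p * x)) * φ (x + q)) := by
    rw [L2.inner_def]
    refine integral_congr_ae <| (hW (-q) (-p) φ).mono fun x hx => ?_
    simp only [RCLike.inner_apply, Prod.neg_mk, hx, sub_neg_eq_add, ofReal_neg, neg_mul_neg]
    ring
  have hR : inner ℂ φ (W (q, p) ψ) =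
      ∫ x, conj (φ (x + q)) * (exp (I * (q * p / 2)) * exp (I * (p * (x + q))) * ψ x) := by
    calc inner ℂ φ (W (q, p) ψ)
        = ∫ x, conj (φ x) * (exp (I * (q * p / 2)) * exp (I * (p * x)) * ψ (x - q)) := by
          rw [L2.inner_def]
          refine integral_congr_ae <| (hW q p ψ).mono fun x hx => ?_
          simp only [RCLike.inner_apply, hx, mul_comm]
      _ = _ := by
          rw [← integral_add_right_eq_self _ q]
          simp only [add_sub_cancel_right, ofReal_add]
  rw [hL, hR, ← integral_conj, ← integral_const_mul]
  congr 1
  funext x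
  simp only [map_mul, map_add, map_div₀, map_ofNat, ← exp_conj, conj_conj, conj_I, conj_ofReal]
  linear_combination (conj (ψ x) * φ (x + q)) * hphase x

theorem norm_inner_neg (z : ℝ × ℝ) (φ ψ : H) :
    ‖inner ℂ ψ (W (-z) φ)‖ = ‖inner ℂ φ (W z ψ)‖ := by
  obtain ⟨q, p⟩ := z
  rw [hW.inner_neg_eq, norm_mul, RCLike.norm_conj, norm_exp]
  simp

theorem norm_inner_apply_le (z : ℝ × ℝ) (φ ψ : H) : ‖inner ℂ φ (W z ψ)‖ ≤ ‖φ‖ * ‖ψ‖ :=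
  hW.norm_apply z ψ ▸ norm_inner_le_norm φ (W z ψ)

end IsWeylFamily

/-- The states are `T = Σ lamT_j |φT_j⟩⟨φT_j|` and `S = Σ lamS_i |φS_i⟩⟨φS_i|`, so that
`tr[S W(z) T W(z)*] = Σ_{i,j} lamS_i lamT_j |⟨φS_i, W(z) φT_j⟩|²`. -/
theorem stmt6
    (W : ℝ × ℝ → (H →L[ℂ] H))
    (hW : ∀ q p : ℝ, ∀ ψ : H,
      (⇑(W (q, p) ψ) : ℝ → ℂ) =ᵐ[volume]
        fun x => Complex.exp (Complex.I * (q * p / 2)) * Complex.exp (Complex.I * (p * x))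
          * ψ (x - q))
    (lamT lamS : ℕ → ℝ) (φT φS : ℕ → H)
    (hT1 : HasSum lamT 1) (hS1 : HasSum lamS 1)
    (hoT : Orthonormal ℂ φT) (hoS : Orthonormal ℂ φS)
    (Z : Set (ℝ × ℝ)) :
    (1 / (2 * Real.pi)) *
        ∫ z in Z, ∑' i, ∑' j, lamS i * lamT j * ‖(inner ℂ (φS i) (W z (φT j)) : ℂ)‖ ^ 2
          ∂(volume : Measure (ℝ × ℝ))
      = (1 / (2 * Real.pi)) *
        ∫ z in (-Z), ∑' j, ∑' i, lamT j * lamS i * ‖(inner ℂ (φT j) (W z (φS i)) : ℂ)‖ ^ 2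
          ∂(volume : Measure (ℝ × ℝ)) := by
  have hWeyl : IsWeylFamily W := hW
  have hbound (z : ℝ × ℝ) (i j : ℕ) : |‖inner ℂ (φS i) (W z (φT j))‖ ^ 2| ≤ 1 := by
    rw [abs_of_nonneg (by positivity)]
    refine pow_le_one₀ (norm_nonneg _) ?_
    simpa [hoS.1 i, hoT.1 j] using hWeyl.norm_inner_apply_le z (φS i) (φT j)
  rw [setIntegral_neg_eq]
  congr 2
  funext z
  rw [tsum_comm_of_summable_of_bounded hS1.summable hT1.summable (hbound z)]
  refine tsum_congr fun j => tsum_congr fun i => ?_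
  rw [hWeyl.norm_inner_neg, mul_comm (lamT j)]
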